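/- arXiv:1008.1966 — 3 statements merged into one kernel-verified Lean document; each statement's English description precedes it below -/
import Mathlib

section
/- In the setting of the extension lemma (H ◁ G, F free on finite A, φ: F → G surjective, R ⊆ F finite with kernel of F → G/H equal to the normal closure of R, and B = { g⁻¹·φ(r)·g : r ∈ R, g ∈ G }): for every word w ∈ F representing the identity of G/H, the word length of φ(w) in H with respect to the generating set B is at most Area(w). Hence, when B is finite, the distortion of H in G gives a lower bound for the Dehn function of G/H with respect to ⟨A | R⟩. -/
/-- `w` freely equals a product of `N` conjugates of elements of `R^±1`. -/
def IsConjProd {A : Type} (R : Set (FreeGroup A)) (N : ℕ) (w : FreeGroup A) : Prop :=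
  ∃ (u r : Fin N → FreeGroup A) (ε : Fin N → ℤ),
    (∀ i, r i ∈ R) ∧ (∀ i, ε i = 1 ∨ ε i = -1) ∧
    w = (List.ofFn fun i => u i * r i ^ ε i * (u i)⁻¹).prod

/-- `Area(w)`: the least `N` such that `w` freely equals a product of `N`
conjugates of relators or their inverses. -/
noncomputable def area {A : Type} (R : Set (FreeGroup A)) (w : FreeGroup A) : ℕ :=
  sInf {N : ℕ | IsConjProd R N w}

/-- The word length of `x` with respect to a generating set `B`: the least `k` such
that `x` is a product of `k` elements of `B ∪ B⁻¹`. -/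
noncomputable def wordLength {G : Type} [Group G] (B : Set G) (x : G) : ℕ :=
  sInf {k : ℕ | ∃ b : Fin k → G, (∀ i, b i ∈ B ∪ B⁻¹) ∧ x = (List.ofFn b).prod}

lemma listConjProd {A : Type} (R : Set (FreeGroup A)) (w : FreeGroup A)
    (hw : w ∈ Subgroup.normalClosure R) :
    ∃ l : List (FreeGroup A),
      (∀ x ∈ l, ∃ u r, ∃ ε : ℤ, r ∈ R ∧ (ε = 1 ∨ ε = -1) ∧ x = u * r ^ ε * u⁻¹) ∧
      w = l.prod := by
  induction hw using Subgroup.closure_induction with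
  | mem x hx =>
    obtain ⟨r, hr, hconj⟩ := Group.mem_conjugatesOfSet_iff.mp hx
    obtain ⟨c, hc⟩ := isConj_iff.mp hconj
    refine ⟨[x], ?_, by simp⟩
    rintro y hy
    simp only [List.mem_singleton] at hy
    subst hy
    refine ⟨c, r, 1, hr, Or.inl rfl, ?_⟩
    rw [zpow_one, hc]
  | one => exact ⟨[], by simp, by simp⟩
  | mul x y _ _ hx hy =>
    obtain ⟨l1, h1, e1⟩ := hx
    obtain ⟨l2, h2, e2⟩ := hy
    exact ⟨l1 ++ l2, by
      intro z hz
      rcases List.mem_append.mp hz with h | h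
      exacts [h1 z h, h2 z h], by simp [e1, e2]⟩
  | inv x _ hx =>
    obtain ⟨l, h, e⟩ := hx
    refine ⟨(l.reverse).map (·⁻¹), ?_, ?_⟩
    · intro z hz
      simp only [List.mem_map, List.mem_reverse] at hz
      obtain ⟨y, hy, rfl⟩ := hz
      obtain ⟨u, r, ε, hr, hε, rfl⟩ := h y hy
      exact ⟨u, r, -ε, hr, by rcases hε with h|h <;> simp [h], by group⟩
    · rw [e, List.prod_inv_reverse, List.map_reverse]

lemma exists_isConjProd {A : Type} (R : Set (FreeGroup A)) (w : FreeGroup A)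
    (hw : w ∈ Subgroup.normalClosure R) : ∃ N, IsConjProd R N w := by
  obtain ⟨l, hl, hprod⟩ := listConjProd R w hw
  refine ⟨l.length, ?_⟩
  choose u r ε hr hε heq using fun i : Fin l.length => hl (l.get i) (l.get_mem i)
  refine ⟨u, r, ε, hr, hε, ?_⟩
  have : (List.ofFn fun i => u i * r i ^ ε i * (u i)⁻¹) = l := by
    conv_rhs => rw [← List.ofFn_get l]
    exact congrArg List.ofFn (funext fun i => (heq i).symm)
  rw [this, hprod]

/-- Corollary 2.2: in the setting of the extension lemma, for every word `w`
representing the identity of `G/H`, the word length of `φ(w)` with respect to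
`B = { g⁻¹·φ(r)·g : r ∈ R, g ∈ G }` is at most `Area(w)`.  Hence, when `B` is finite,
the distortion of `H` in `G` bounds the Dehn function of `G/H` from below. -/
theorem extension_lemma_word_length {G : Type} [Group G] (H : Subgroup G) [H.Normal]
    {A : Type} [Finite A] (φ : FreeGroup A →* G) (hφ : Function.Surjective φ)
    (R : Set (FreeGroup A)) (hRfin : R.Finite)
    (hker : ((QuotientGroup.mk' H).comp φ).ker = Subgroup.normalClosure R)
    (B : Set G) (hB : B = {x : G | ∃ r ∈ R, ∃ g : G, x = g⁻¹ * φ r * g})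
    (w : FreeGroup A) (hw1 : (QuotientGroup.mk' H).comp φ w = 1) :
    wordLength B (φ w) ≤ area R w := by
  have hwmem : w ∈ Subgroup.normalClosure R := by
    rw [← hker]; exact hw1
  have hne : {N : ℕ | IsConjProd R N w}.Nonempty := exists_isConjProd R w hwmem
  have hA : IsConjProd R (area R w) w := Nat.sInf_mem hne
  obtain ⟨u, r, ε, hr, hε, hprod⟩ := hA
  apply Nat.sInf_le
  refine ⟨fun i => φ (u i * r i ^ ε i * (u i)⁻¹), ?_, ?_⟩
  · intro i
    have hmemB : φ (u i) * φ (r i) * (φ (u i))⁻¹ ∈ B := by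
      rw [hB]
      exact ⟨r i, hr i, (φ (u i))⁻¹, by group⟩
    rcases hε i with h | h
    · left
      simpa [h] using hmemB
    · right
      have : φ (u i * r i ^ ε i * (u i)⁻¹) = (φ (u i) * φ (r i) * (φ (u i))⁻¹)⁻¹ := by
        simp [h]; group
      rw [Set.mem_inv]
      show (φ (u i * r i ^ ε i * (u i)⁻¹))⁻¹ ∈ B
      rw [this, inv_inv]
      exact hmemB
  · have h2 := congrArg φ hprod
    rw [map_list_prod, List.map_ofFn] at h2
    exact h2
end

section
/- In the group Γ̄ presented by ⟨a, p, q, s, t | [a,a^t] = p, a·a^t = a^s·q, s⁻¹ps = p⁻¹, t⁻¹pt = p⁻¹, [a,p] = 1, [s,t] = 1, [p,q] = 1, s⁻¹qs = q⁻¹, t⁻¹qt = q⁻¹, [a,q] = 1⟩, the subgroup H generated by (the images of) p and q is isomorphic to ℤ². -/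
/-- The five generators of the group `Γ̄`. -/
inductive Letter : Type
  | a | p | q | s | t
  deriving DecidableEq

/-- The free group on `{a, p, q, s, t}`. -/
abbrev F : Type := FreeGroup Letter

def a : F := FreeGroup.of Letter.a
def p : F := FreeGroup.of Letter.p
def q : F := FreeGroup.of Letter.q
def s : F := FreeGroup.of Letter.s
def t : F := FreeGroup.of Letter.t

/-- The commutator convention `[x, y] = x⁻¹ y⁻¹ x y`. -/
def cmm (x y : F) : F := x⁻¹ * y⁻¹ * x * y

/-- The relator set of the presentation
`⟨a, p, q, s, t | [a,a^t] = p, a·a^t = a^s·q, s⁻¹ps = p⁻¹, t⁻¹pt = p⁻¹, [a,p] = 1,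
[s,t] = 1, [p,q] = 1, s⁻¹qs = q⁻¹, t⁻¹qt = q⁻¹, [a,q] = 1⟩`. -/
def Rbar : Set F :=
  {cmm a (t⁻¹ * a * t) * p⁻¹,
   a * (t⁻¹ * a * t) * ((s⁻¹ * a * s) * q)⁻¹,
   s⁻¹ * p * s * p,
   t⁻¹ * p * t * p,
   cmm a p,
   cmm s t,
   cmm p q,
   s⁻¹ * q * s * q,
   t⁻¹ * q * t * q,
   cmm a q}

/-- The group `Γ̄`, i.e. the quotient of `F` by the normal closure of `Rbar`. -/
abbrev GammaBar : Type := PresentedGroup Rbar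


namespace Witness

@[ext] structure Nn where
  v1 : ℤ
  v2 : ℤ
  z1 : ℤ
  z2 : ℤ
  deriving DecidableEq

namespace Nn

instance : Mul Nn :=
  ⟨fun x y => ⟨x.v1 + y.v1, x.v2 + y.v2,
    x.z1 + y.z1 + (x.v1 * y.v1 - x.v2 * y.v1 - x.v2 * y.v2),
    x.z2 + y.z2 + (-2 * x.v1 * y.v1 + x.v1 * y.v2 + x.v2 * y.v1 + 2 * x.v2 * y.v2)⟩⟩

instance : One Nn := ⟨⟨0, 0, 0, 0⟩⟩

instance : Inv Nn :=
  ⟨fun x => ⟨-x.v1, -x.v2,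
    -x.z1 + (x.v1 * x.v1 - x.v2 * x.v1 - x.v2 * x.v2),
    -x.z2 + (-2 * x.v1 * x.v1 + x.v1 * x.v2 + x.v2 * x.v1 + 2 * x.v2 * x.v2)⟩⟩

@[simp] lemma mul_v1 (x y : Nn) : (x * y).v1 = x.v1 + y.v1 := rfl
@[simp] lemma mul_v2 (x y : Nn) : (x * y).v2 = x.v2 + y.v2 := rfl
@[simp] lemma mul_z1 (x y : Nn) :
    (x * y).z1 = x.z1 + y.z1 + (x.v1 * y.v1 - x.v2 * y.v1 - x.v2 * y.v2) := rfl
@[simp] lemma mul_z2 (x y : Nn) :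
    (x * y).z2 = x.z2 + y.z2 + (-2 * x.v1 * y.v1 + x.v1 * y.v2 + x.v2 * y.v1 + 2 * x.v2 * y.v2) := rfl
@[simp] lemma one_v1 : (1 : Nn).v1 = 0 := rfl
@[simp] lemma one_v2 : (1 : Nn).v2 = 0 := rfl
@[simp] lemma one_z1 : (1 : Nn).z1 = 0 := rfl
@[simp] lemma one_z2 : (1 : Nn).z2 = 0 := rfl
@[simp] lemma inv_v1 (x : Nn) : x⁻¹.v1 = -x.v1 := rfl
@[simp] lemma inv_v2 (x : Nn) : x⁻¹.v2 = -x.v2 := rfl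
@[simp] lemma inv_z1 (x : Nn) :
    x⁻¹.z1 = -x.z1 + (x.v1 * x.v1 - x.v2 * x.v1 - x.v2 * x.v2) := rfl
@[simp] lemma inv_z2 (x : Nn) :
    x⁻¹.z2 = -x.z2 + (-2 * x.v1 * x.v1 + x.v1 * x.v2 + x.v2 * x.v1 + 2 * x.v2 * x.v2) := rfl

instance : Group Nn where
  mul_assoc x y z := by ext <;> simp <;> ring
  one_mul x := by ext <;> simp
  mul_one x := by ext <;> simp
  inv_mul_cancel x := by ext <;> simp <;> ring

end Nn

/-- The automorphism of `Nn` given by multiplication by `1 + φ` on the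
`ℤ[φ]`-part and `-1` on the centre. -/
def alpha : Nn ≃* Nn where
  toFun x := ⟨x.v1 + x.v2, x.v1, -x.z1, -x.z2⟩
  invFun x := ⟨x.v2, x.v1 - x.v2, -x.z1, -x.z2⟩
  left_inv x := by ext <;> simp
  right_inv x := by ext <;> simp
  map_mul' x y := by ext <;> simp <;> ring

@[simp] lemma alpha_apply (x : Nn) : alpha x = ⟨x.v1 + x.v2, x.v1, -x.z1, -x.z2⟩ := rfl
@[simp] lemma alpha_symm_apply (x : Nn) : alpha.symm x = ⟨x.v2, x.v1 - x.v2, -x.z1, -x.z2⟩ := rfl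

def phi : Multiplicative ℤ →* MulAut Nn := zpowersHom _ alpha

abbrev G := Nn ⋊[phi] Multiplicative ℤ

open SemidirectProduct

def f : Letter → G
  | .a => inl ⟨1, 0, 0, 0⟩
  | .p => inl ⟨0, 0, 1, 0⟩
  | .q => inl ⟨0, 0, 0, 1⟩
  | .s => inr (Multiplicative.ofAdd (-1))
  | .t => inr (Multiplicative.ofAdd 1)

lemma conj_t (n : Nn) : (f .t)⁻¹ * inl n * (f .t) = inl (alpha.symm n) := by
  apply SemidirectProduct.ext
  · simp [f, MulAut.inv_def]
    simp [phi, MulAut.inv_def]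
  · simp [f]

lemma conj_s (n : Nn) : (f .s)⁻¹ * inl n * (f .s) = inl (alpha n) := by
  apply SemidirectProduct.ext
  · simp [f, MulAut.inv_def]
    simp [phi, MulAut.inv_def]
  · simp [f]

lemma rels_hold : ∀ r ∈ Rbar, FreeGroup.lift f r = 1 := by
  intro r hr
  simp only [Rbar, Set.mem_insert_iff, Set.mem_singleton_iff] at hr
  rcases hr with rfl|rfl|rfl|rfl|rfl|rfl|rfl|rfl|rfl|rfl <;>
    simp only [cmm, a, p, q, s, t, map_mul, map_inv, FreeGroup.lift_apply_of] <;>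
    apply SemidirectProduct.ext <;>
    simp [f, phi, MulAut.inv_def] <;>
    decide


end Witness

open SemidirectProduct in
/-- The homomorphism `Γ̄ →* G` induced by `f`. -/
def Phi : GammaBar →* Witness.G := PresentedGroup.toGroup Witness.rels_hold

namespace Witness

lemma of_eq_mk (x : Letter) :
    (PresentedGroup.of x : GammaBar) = PresentedGroup.mk Rbar (FreeGroup.of x) := rfl

lemma comm_PQ :
    Commute (PresentedGroup.of (rels := Rbar) Letter.p)
      (PresentedGroup.of (rels := Rbar) Letter.q) := by
  have hm : cmm p q ∈ Subgroup.normalClosure Rbar :=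
    Subgroup.subset_normalClosure (by simp [Rbar])
  have h : PresentedGroup.mk Rbar (cmm p q) = 1 := (QuotientGroup.eq_one_iff _).2 hm
  simp only [cmm, map_mul, map_inv, p, q] at h
  have h2 := congrArg (fun z => PresentedGroup.mk Rbar (FreeGroup.of Letter.q) *
      (PresentedGroup.mk Rbar (FreeGroup.of Letter.p) * z)) h
  simp only [mul_assoc, inv_mul_cancel_left, mul_inv_cancel_left, mul_one] at h2
  unfold Commute SemiconjBy
  exact h2

/-- The homomorphism `ℤ² →* Γ̄` sending `(m, n)` to `p^m q^n`. -/
def psi : Multiplicative (ℤ × ℤ) →* GammaBar where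
  toFun x := (PresentedGroup.of (rels := Rbar) Letter.p) ^ (Multiplicative.toAdd x).1 *
      (PresentedGroup.of (rels := Rbar) Letter.q) ^ (Multiplicative.toAdd x).2
  map_one' := by simp
  map_mul' x y := by
    simp only [toAdd_mul, Prod.fst_add, Prod.snd_add, zpow_add]
    rw [(comm_PQ.zpow_zpow ((Multiplicative.toAdd y).1)
      ((Multiplicative.toAdd x).2)).symm.mul_mul_mul_comm]

lemma psi_apply (x : Multiplicative (ℤ × ℤ)) :
    psi x = PresentedGroup.of (rels := Rbar) Letter.p ^ (Multiplicative.toAdd x).1 *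
      PresentedGroup.of (rels := Rbar) Letter.q ^ (Multiplicative.toAdd x).2 := rfl

lemma Pzpow (k : ℤ) : (⟨0, 0, 1, 0⟩ : Nn) ^ k = ⟨0, 0, k, 0⟩ := by
  induction k using Int.induction_on with
  | zero => rfl
  | succ n ih => rw [zpow_add_one, ih]; ext <;> simp
  | pred n ih => rw [zpow_sub_one, ih]; ext <;> simp <;> omega

lemma Qzpow (k : ℤ) : (⟨0, 0, 0, 1⟩ : Nn) ^ k = ⟨0, 0, 0, k⟩ := by
  induction k using Int.induction_on with
  | zero => rfl
  | succ n ih => rw [zpow_add_one, ih]; ext <;> simp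
  | pred n ih => rw [zpow_sub_one, ih]; ext <;> simp <;> omega

open SemidirectProduct in
lemma Phi_psi (x : Multiplicative (ℤ × ℤ)) :
    Phi (psi x) = inl (⟨0, 0, (Multiplicative.toAdd x).1, (Multiplicative.toAdd x).2⟩ : Nn) := by
  show Phi (PresentedGroup.of Letter.p ^ (Multiplicative.toAdd x).1 *
      PresentedGroup.of Letter.q ^ (Multiplicative.toAdd x).2) = _
  rw [map_mul, map_zpow, map_zpow]
  rw [show Phi (PresentedGroup.of Letter.p) = inl (⟨0, 0, 1, 0⟩ : Nn) from
    PresentedGroup.toGroup.of rels_hold]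
  rw [show Phi (PresentedGroup.of Letter.q) = inl (⟨0, 0, 0, 1⟩ : Nn) from
    PresentedGroup.toGroup.of rels_hold]
  rw [← map_zpow inl, ← map_zpow inl, ← map_mul, Pzpow, Qzpow]
  congr 1
  ext <;> simp

open SemidirectProduct in
lemma psi_injective : Function.Injective psi := by
  rw [injective_iff_map_eq_one]
  intro x hx
  have h1 : inl (⟨0, 0, (Multiplicative.toAdd x).1, (Multiplicative.toAdd x).2⟩ : Nn)
      = (1 : G) := by rw [← Phi_psi x, hx, map_one]
  rw [show (1 : G) = inl (1 : Nn) from (map_one inl).symm, inl_inj] at h1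
  have h2 : (Multiplicative.toAdd x) = (0, 0) := by
    rw [show (1 : Nn) = ⟨0, 0, 0, 0⟩ from rfl, Nn.mk.injEq] at h1
    exact Prod.ext h1.2.2.1 h1.2.2.2
  have : Multiplicative.toAdd x = Multiplicative.toAdd (1 : Multiplicative (ℤ × ℤ)) := h2
  exact Multiplicative.toAdd.injective this

set_option maxHeartbeats 1000000 in
lemma psi_range :
    psi.range = Subgroup.closure
      {PresentedGroup.of (rels := Rbar) Letter.p, PresentedGroup.of (rels := Rbar) Letter.q} := by
  apply le_antisymm
  · rintro g hg
    rw [MonoidHom.mem_range] at hg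
    obtain ⟨x, hx⟩ := hg
    rw [← hx, psi_apply]
    apply Subgroup.mul_mem
    · apply Subgroup.zpow_mem
      exact Subgroup.subset_closure (Set.mem_insert _ _)
    · apply Subgroup.zpow_mem
      exact Subgroup.subset_closure (Set.mem_insert_of_mem _ rfl)
  · rw [Subgroup.closure_le]
    intro x hx
    rcases hx with rfl | hx
    · exact ⟨Multiplicative.ofAdd (1, 0), by simp [psi]⟩
    · rw [Set.mem_singleton_iff] at hx
      subst hx
      exact ⟨Multiplicative.ofAdd (0, 1), by simp [psi]⟩

end Witness

/-- Lemma 2.4: the subgroup `H = ⟨p, q⟩` of `Γ̄` is isomorphic to `ℤ²`. -/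
theorem H_isomorphic_to_Z2 :
    Nonempty
      ((Subgroup.closure {PresentedGroup.of Letter.p, PresentedGroup.of Letter.q} :
          Subgroup GammaBar) ≃* Multiplicative (ℤ × ℤ)) := by
  exact ⟨(MulEquiv.subgroupCongr Witness.psi_range).symm.trans
    (MonoidHom.ofInjective Witness.psi_injective).symm⟩
end

section
/- In the group Γ̄ presented by ⟨a, p, q, s, t | [a,a^t] = p, a·a^t = a^s·q, s⁻¹ps = p⁻¹, t⁻¹pt = p⁻¹, [a,p] = 1, [s,t] = 1, [p,q] = 1, s⁻¹qs = q⁻¹, t⁻¹qt = q⁻¹, [a,q] = 1⟩, for every n ≥ 0 one has the equality [a, t⁻ⁿ·a·tⁿ] = p^((−1)^{n+1}·F_n), where F_n is the n-th Fibonacci number. -/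
section helpers
variable {G : Type*} [Group G]

private lemma comm_of_rel {x y : G} (h : x⁻¹ * y⁻¹ * x * y = 1) : x * y = y * x := by
  calc x * y = y * x * (x⁻¹ * y⁻¹ * x * y) := by group
    _ = y * x := by rw [h, mul_one]

private lemma conjneg_of_rel {g x : G} (h : g⁻¹ * x * g * x = 1) : g⁻¹ * x * g = x⁻¹ := by
  calc g⁻¹ * x * g = (g⁻¹ * x * g * x) * x⁻¹ := by group
    _ = x⁻¹ := by rw [h, one_mul]

private lemma myconj_zpow (g x : G) (k : ℤ) : g⁻¹ * x ^ k * g = (g⁻¹ * x * g) ^ k := by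
  simpa using (conj_zpow (i := k) (a := g⁻¹) (b := x)).symm

private lemma flip_conj {g x y : G} (h : g⁻¹ * x * g = y) : g * y * g⁻¹ = x := by
  rw [← h]; group

private lemma conj_neg_zpow {g x : G} (h : g⁻¹ * x * g = x⁻¹) (m : ℤ) :
    g⁻¹ * x ^ m * g = x ^ (-m) := by
  rw [myconj_zpow, h, inv_zpow, ← zpow_neg]

private lemma conj_neg_rev {g x : G} (h : g⁻¹ * x * g = x⁻¹) : g * x * g⁻¹ = x⁻¹ := by
  have h2 := flip_conj h
  rw [show g * x * g⁻¹ = (g * x⁻¹ * g⁻¹)⁻¹ by group, h2]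

private lemma conj_comm' {g x : G} (h : Commute g x) : g * x * g⁻¹ = x := by
  rw [h.eq]; group

private lemma conj_comm {g x : G} (h : Commute g x) : g⁻¹ * x * g = x := by
  have : Commute g⁻¹ x := h.inv_left
  simpa using conj_comm' this

private lemma conj_neg_pow_zpow {g x : G} (h : g⁻¹ * x * g = x⁻¹) :
    ∀ (n : ℕ) (m : ℤ), (g ^ n)⁻¹ * x ^ m * g ^ n = x ^ ((-1 : ℤ) ^ n * m) := by
  intro n
  induction n with
  | zero => intro m; simp
  | succ n ih =>
    intro m
    calc (g ^ (n+1))⁻¹ * x ^ m * g ^ (n+1)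
        = g⁻¹ * ((g ^ n)⁻¹ * x ^ m * g ^ n) * g := by rw [pow_succ]; group
      _ = g⁻¹ * x ^ ((-1:ℤ) ^ n * m) * g := by rw [ih]
      _ = x ^ (-((-1:ℤ) ^ n * m)) := conj_neg_zpow h _
      _ = x ^ ((-1:ℤ) ^ (n+1) * m) := by rw [show -((-1:ℤ) ^ n * m) = (-1:ℤ) ^ (n+1) * m by ring]

private lemma conj_neg_pow_zpow' {g x : G} (h : g⁻¹ * x * g = x⁻¹) (n : ℕ) (m : ℤ) :
    g ^ n * x ^ m * (g ^ n)⁻¹ = x ^ ((-1 : ℤ) ^ n * m) := by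
  have h' : (g⁻¹)⁻¹ * x * g⁻¹ = x⁻¹ := by rw [inv_inv]; exact conj_neg_rev h
  have := conj_neg_pow_zpow h' n m
  simpa [inv_pow] using this

private lemma neg_one_sq_pow (n : ℕ) : ((-1:ℤ) ^ n * (-1:ℤ) ^ n) = 1 := by
  rw [← pow_add]; exact Even.neg_one_pow ⟨n, rfl⟩

private lemma step (A P Q S T u v x : G) (d0 d1 j k : ℤ)
    (hAP : Commute A P) (hAQ : Commute A Q) (hPQ : Commute P Q)
    (hST : Commute S T)
    (hPv : Commute P v)
    (hQv : Commute Q v)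
    (hSP : S⁻¹ * P * S = P⁻¹) (hTP : T⁻¹ * P * T = P⁻¹)
    (hSQ : S⁻¹ * Q * S = Q⁻¹) (hTQ : T⁻¹ * Q * T = Q⁻¹)
    (hA1 : S⁻¹ * A * S = A * (T⁻¹ * A * T) * Q⁻¹)
    (hu : T⁻¹ * u * T = v)
    (hus : S⁻¹ * u * S = u * v * Q ^ j)
    (hvs : S⁻¹ * v * S = v * x * Q ^ k)
    (IH0 : A * u = u * A * P ^ d0) (IH1 : A * v = v * A * P ^ d1) :
    A * x = x * A * P ^ (d0 - d1) := by
  set A1 : G := T⁻¹ * A * T with hA1d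
  set B : G := S⁻¹ * v * S with hBd
  have hPA1 : Commute P A1 := by
    show P * A1 = A1 * P
    rw [hA1d]
    calc P * (T⁻¹ * A * T) = T⁻¹ * (T * P * T⁻¹) * A * T := by group
      _ = T⁻¹ * P⁻¹ * A * T := by rw [conj_neg_rev hTP]
      _ = T⁻¹ * (A * P⁻¹) * T := by rw [show T⁻¹ * P⁻¹ * A * T = T⁻¹ * (P⁻¹ * A) * T by group,
            ← hAP.inv_right.eq]
      _ = (T⁻¹ * A * T) * (T⁻¹ * P⁻¹ * T) := by group
      _ = (T⁻¹ * A * T) * P := by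
            rw [show T⁻¹ * P⁻¹ * T = (T⁻¹ * P * T)⁻¹ by group, hTP, inv_inv]
  have hPB : Commute P B := by
    show P * B = B * P
    rw [hBd]
    calc P * (S⁻¹ * v * S) = S⁻¹ * (S * P * S⁻¹) * v * S := by group
      _ = S⁻¹ * P⁻¹ * v * S := by rw [conj_neg_rev hSP]
      _ = S⁻¹ * (v * P⁻¹) * S := by rw [show S⁻¹ * P⁻¹ * v * S = S⁻¹ * (P⁻¹ * v) * S by group,
            hPv.inv_left.eq]
      _ = (S⁻¹ * v * S) * (S⁻¹ * P⁻¹ * S) := by group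
      _ = (S⁻¹ * v * S) * P := by
            rw [show S⁻¹ * P⁻¹ * S = (S⁻¹ * P * S)⁻¹ by group, hSP, inv_inv]
  have hQB : Commute Q B := by
    show Q * B = B * Q
    rw [hBd]
    calc Q * (S⁻¹ * v * S) = S⁻¹ * (S * Q * S⁻¹) * v * S := by group
      _ = S⁻¹ * Q⁻¹ * v * S := by rw [conj_neg_rev hSQ]
      _ = S⁻¹ * (v * Q⁻¹) * S := by rw [show S⁻¹ * Q⁻¹ * v * S = S⁻¹ * (Q⁻¹ * v) * S by group,
            hQv.inv_left.eq]
      _ = (S⁻¹ * v * S) * (S⁻¹ * Q⁻¹ * S) := by group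
      _ = (S⁻¹ * v * S) * Q := by
            rw [show S⁻¹ * Q⁻¹ * S = (S⁻¹ * Q * S)⁻¹ by group, hSQ, inv_inv]
  have hXA : A * (u * v) = u * v * A * P ^ (d0 + d1) := by
    calc A * (u * v) = (A * u) * v := by group
      _ = (u * A * P ^ d0) * v := by rw [IH0]
      _ = (u * A) * (P ^ d0 * v) := by group
      _ = (u * A) * (v * P ^ d0) := by rw [(hPv.zpow_left d0).eq]
      _ = u * (A * v) * P ^ d0 := by group
      _ = u * (v * A * P ^ d1) * P ^ d0 := by rw [IH1]
      _ = u * v * A * (P ^ d1 * P ^ d0) := by group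
      _ = u * v * A * P ^ (d0 + d1) := by rw [← zpow_add, add_comm d1 d0]
  have hAS : A * (S⁻¹ * u * S) = (S⁻¹ * u * S) * A * P ^ (d0 + d1) := by
    calc A * (S⁻¹ * u * S) = A * (u * v * Q ^ j) := by rw [hus]
      _ = A * (u * v) * Q ^ j := by group
      _ = u * v * A * P ^ (d0 + d1) * Q ^ j := by rw [hXA]
      _ = u * v * A * (P ^ (d0 + d1) * Q ^ j) := by group
      _ = u * v * A * (Q ^ j * P ^ (d0 + d1)) := by rw [((hPQ.zpow_left (d0+d1)).zpow_right j).eq]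
      _ = u * v * (A * Q ^ j) * P ^ (d0 + d1) := by group
      _ = u * v * (Q ^ j * A) * P ^ (d0 + d1) := by rw [(hAQ.zpow_right j).eq]
      _ = (u * v * Q ^ j) * A * P ^ (d0 + d1) := by group
      _ = (S⁻¹ * u * S) * A * P ^ (d0 + d1) := by rw [← hus]
  have hconjS : T⁻¹ * (S⁻¹ * u * S) * T = B := by
    have c1 : S⁻¹ * T⁻¹ = T⁻¹ * S⁻¹ := (hST.inv_left.inv_right).eq
    calc T⁻¹ * (S⁻¹ * u * S) * T = (T⁻¹ * S⁻¹) * u * (S * T) := by group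
      _ = (S⁻¹ * T⁻¹) * u * (T * S) := by rw [← c1, ← hST.eq]
      _ = S⁻¹ * (T⁻¹ * u * T) * S := by group
      _ = S⁻¹ * v * S := by rw [hu]
  have hA1B : A1 * B = B * A1 * P ^ (-(d0 + d1)) := by
    have big := congrArg (fun z => T⁻¹ * z * T) hAS
    have L : T⁻¹ * (A * (S⁻¹ * u * S)) * T = A1 * B := by
      calc T⁻¹ * (A * (S⁻¹ * u * S)) * T
          = (T⁻¹ * A * T) * (T⁻¹ * (S⁻¹ * u * S) * T) := by group
        _ = A1 * B := by rw [hconjS, hA1d]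
    have R : T⁻¹ * ((S⁻¹ * u * S) * A * P ^ (d0 + d1)) * T = B * A1 * P ^ (-(d0 + d1)) := by
      calc T⁻¹ * ((S⁻¹ * u * S) * A * P ^ (d0 + d1)) * T
          = (T⁻¹ * (S⁻¹ * u * S) * T) * (T⁻¹ * A * T) * (T⁻¹ * P ^ (d0 + d1) * T) := by group
        _ = B * A1 * P ^ (-(d0 + d1)) := by rw [hconjS, hA1d, conj_neg_zpow hTP]
    rw [L, R] at big
    exact big
  have comm1 : A⁻¹ * v⁻¹ * A * v = P ^ d1 := by
    calc A⁻¹ * v⁻¹ * A * v = A⁻¹ * v⁻¹ * (A * v) := by group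
      _ = A⁻¹ * v⁻¹ * (v * A * P ^ d1) := by rw [IH1]
      _ = P ^ d1 := by group
  have fstar : (A * A1 * Q⁻¹)⁻¹ * B⁻¹ * (A * A1 * Q⁻¹) * B = P ^ (-d1) := by
    have big := congrArg (fun z => S⁻¹ * z * S) comm1
    have L : S⁻¹ * (A⁻¹ * v⁻¹ * A * v) * S
        = (S⁻¹ * A * S)⁻¹ * B⁻¹ * (S⁻¹ * A * S) * B := by
      rw [hBd]; group
    have R : S⁻¹ * P ^ d1 * S = P ^ (-d1) := conj_neg_zpow hSP d1
    rw [L, R, hA1] at big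
    exact big
  have f2 : Q * (A1⁻¹ * A⁻¹ * B⁻¹ * A * A1 * B) * Q⁻¹ = P ^ (-d1) := by
    calc Q * (A1⁻¹ * A⁻¹ * B⁻¹ * A * A1 * B) * Q⁻¹
        = Q * A1⁻¹ * A⁻¹ * B⁻¹ * A * A1 * (B * Q⁻¹) := by group
      _ = Q * A1⁻¹ * A⁻¹ * B⁻¹ * A * A1 * (Q⁻¹ * B) := by rw [← hQB.inv_left.eq]
      _ = (A * A1 * Q⁻¹)⁻¹ * B⁻¹ * (A * A1 * Q⁻¹) * B := by group
      _ = P ^ (-d1) := fstar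
  have c1 : A1⁻¹ * A⁻¹ * B⁻¹ * A * A1 * B = P ^ (-d1) := by
    calc A1⁻¹ * A⁻¹ * B⁻¹ * A * A1 * B
        = Q⁻¹ * (Q * (A1⁻¹ * A⁻¹ * B⁻¹ * A * A1 * B) * Q⁻¹) * Q := by group
      _ = Q⁻¹ * P ^ (-d1) * Q := by rw [f2]
      _ = P ^ (-d1) := conj_comm (hPQ.symm.zpow_right (-d1))
  have c1' : A1⁻¹ * A⁻¹ * B⁻¹ * A * (B * A1 * P ^ (-(d0 + d1))) = P ^ (-d1) := by
    rw [← hA1B]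
    calc A1⁻¹ * A⁻¹ * B⁻¹ * A * (A1 * B)
        = A1⁻¹ * A⁻¹ * B⁻¹ * A * A1 * B := by group
      _ = P ^ (-d1) := c1
  have k1eq : A⁻¹ * B⁻¹ * A * B = P ^ d0 := by
    calc A⁻¹ * B⁻¹ * A * B
        = A1 * (A1⁻¹ * A⁻¹ * B⁻¹ * A * (B * A1 * P ^ (-(d0 + d1)))) * P ^ (d0 + d1) * A1⁻¹ := by
          group
      _ = A1 * P ^ (-d1) * P ^ (d0 + d1) * A1⁻¹ := by rw [c1']
      _ = A1 * P ^ d0 * A1⁻¹ := by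
          rw [show A1 * P ^ (-d1) * P ^ (d0 + d1) * A1⁻¹
            = A1 * (P ^ (-d1) * P ^ (d0 + d1)) * A1⁻¹ by group, ← zpow_add,
            show -d1 + (d0 + d1) = d0 by ring]
      _ = P ^ d0 := conj_comm' (hPA1.symm.zpow_right d0)
  have k1 : A * B = B * A * P ^ d0 := by
    calc A * B = B * A * (A⁻¹ * B⁻¹ * A * B) := by group
      _ = B * A * P ^ d0 := by rw [k1eq]
  have t1 : v * A = A * v * P ^ (-d1) := by
    calc v * A = v * A * P ^ d1 * P ^ (-d1) := by group
      _ = (A * v) * P ^ (-d1) := by rw [← IH1]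
  have ihinv : A * v⁻¹ = v⁻¹ * A * P ^ (-d1) := by
    calc A * v⁻¹ = v⁻¹ * (v * A) * v⁻¹ := by group
      _ = v⁻¹ * (A * v * P ^ (-d1)) * v⁻¹ := by rw [t1]
      _ = v⁻¹ * A * (v * P ^ (-d1) * v⁻¹) := by group
      _ = v⁻¹ * A * P ^ (-d1) := by rw [conj_comm' ((hPv.zpow_left (-d1)).symm)]
  have hx : x = v⁻¹ * B * Q ^ (-k) := by
    rw [hvs]; group
  calc A * x = A * (v⁻¹ * B * Q ^ (-k)) := by rw [hx]
    _ = (A * v⁻¹) * B * Q ^ (-k) := by group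
    _ = (v⁻¹ * A * P ^ (-d1)) * B * Q ^ (-k) := by rw [ihinv]
    _ = v⁻¹ * A * (P ^ (-d1) * B) * Q ^ (-k) := by group
    _ = v⁻¹ * A * (B * P ^ (-d1)) * Q ^ (-k) := by rw [(hPB.zpow_left (-d1)).eq]
    _ = v⁻¹ * (A * B) * (P ^ (-d1) * Q ^ (-k)) := by group
    _ = v⁻¹ * (B * A * P ^ d0) * (P ^ (-d1) * Q ^ (-k)) := by rw [k1]
    _ = v⁻¹ * B * A * (P ^ d0 * P ^ (-d1)) * Q ^ (-k) := by group
    _ = v⁻¹ * B * A * P ^ (d0 - d1) * Q ^ (-k) := by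
        rw [← zpow_add, show d0 + -d1 = d0 - d1 by ring]
    _ = v⁻¹ * B * A * (P ^ (d0 - d1) * Q ^ (-k)) := by group
    _ = v⁻¹ * B * A * (Q ^ (-k) * P ^ (d0 - d1)) := by
        rw [((hPQ.zpow_left (d0 - d1)).zpow_right (-k)).eq]
    _ = v⁻¹ * B * (A * Q ^ (-k)) * P ^ (d0 - d1) := by group
    _ = v⁻¹ * B * (Q ^ (-k) * A) * P ^ (d0 - d1) := by rw [(hAQ.zpow_right (-k)).eq]
    _ = (v⁻¹ * B * Q ^ (-k)) * A * P ^ (d0 - d1) := by group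
    _ = x * A * P ^ (d0 - d1) := by rw [← hx]

private theorem key (A P Q S T : G)
    (h1 : A⁻¹ * (T⁻¹ * A * T)⁻¹ * A * (T⁻¹ * A * T) = P)
    (hA1 : S⁻¹ * A * S = A * (T⁻¹ * A * T) * Q⁻¹)
    (hSP : S⁻¹ * P * S = P⁻¹) (hTP : T⁻¹ * P * T = P⁻¹)
    (hSQ : S⁻¹ * Q * S = Q⁻¹) (hTQ : T⁻¹ * Q * T = Q⁻¹)
    (hAP : Commute A P) (hST : Commute S T) (hPQ : Commute P Q) (hAQ : Commute A Q) :
    ∀ n : ℕ, A⁻¹ * ((T ^ n)⁻¹ * A * T ^ n)⁻¹ * A * ((T ^ n)⁻¹ * A * T ^ n)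
      = P ^ ((-1 : ℤ) ^ (n + 1) * (Nat.fib n : ℤ)) := by
  -- commutation of P and Q with the conjugates of A
  have hPw : ∀ n : ℕ, Commute P ((T ^ n)⁻¹ * A * T ^ n) := by
    intro n
    have tP1' : T ^ n * P * (T ^ n)⁻¹ = P ^ ((-1:ℤ) ^ n) := by
      simpa using conj_neg_pow_zpow' hTP n 1
    show P * ((T ^ n)⁻¹ * A * T ^ n) = ((T ^ n)⁻¹ * A * T ^ n) * P
    calc P * ((T ^ n)⁻¹ * A * T ^ n)
        = (T ^ n)⁻¹ * (T ^ n * P * (T ^ n)⁻¹) * A * T ^ n := by group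
      _ = (T ^ n)⁻¹ * P ^ ((-1:ℤ) ^ n) * A * T ^ n := by rw [tP1']
      _ = (T ^ n)⁻¹ * (A * P ^ ((-1:ℤ) ^ n)) * T ^ n := by
          rw [show (T ^ n)⁻¹ * P ^ ((-1:ℤ) ^ n) * A * T ^ n
            = (T ^ n)⁻¹ * (P ^ ((-1:ℤ) ^ n) * A) * T ^ n by group,
            ← (hAP.zpow_right ((-1:ℤ) ^ n)).eq]
      _ = ((T ^ n)⁻¹ * A * T ^ n) * ((T ^ n)⁻¹ * P ^ ((-1:ℤ) ^ n) * T ^ n) := by group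
      _ = ((T ^ n)⁻¹ * A * T ^ n) * P := by
          rw [conj_neg_pow_zpow hTP n ((-1:ℤ) ^ n), neg_one_sq_pow, zpow_one]
  have hQw : ∀ n : ℕ, Commute Q ((T ^ n)⁻¹ * A * T ^ n) := by
    intro n
    have tQ1' : T ^ n * Q * (T ^ n)⁻¹ = Q ^ ((-1:ℤ) ^ n) := by
      simpa using conj_neg_pow_zpow' hTQ n 1
    show Q * ((T ^ n)⁻¹ * A * T ^ n) = ((T ^ n)⁻¹ * A * T ^ n) * Q
    calc Q * ((T ^ n)⁻¹ * A * T ^ n)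
        = (T ^ n)⁻¹ * (T ^ n * Q * (T ^ n)⁻¹) * A * T ^ n := by group
      _ = (T ^ n)⁻¹ * Q ^ ((-1:ℤ) ^ n) * A * T ^ n := by rw [tQ1']
      _ = (T ^ n)⁻¹ * (A * Q ^ ((-1:ℤ) ^ n)) * T ^ n := by
          rw [show (T ^ n)⁻¹ * Q ^ ((-1:ℤ) ^ n) * A * T ^ n
            = (T ^ n)⁻¹ * (Q ^ ((-1:ℤ) ^ n) * A) * T ^ n by group,
            ← (hAQ.zpow_right ((-1:ℤ) ^ n)).eq]
      _ = ((T ^ n)⁻¹ * A * T ^ n) * ((T ^ n)⁻¹ * Q ^ ((-1:ℤ) ^ n) * T ^ n) := by group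
      _ = ((T ^ n)⁻¹ * A * T ^ n) * Q := by
          rw [conj_neg_pow_zpow hTQ n ((-1:ℤ) ^ n), neg_one_sq_pow, zpow_one]
  -- shifting the conjugates
  have hwu : ∀ n : ℕ, T⁻¹ * ((T ^ n)⁻¹ * A * T ^ n) * T = (T ^ (n+1))⁻¹ * A * T ^ (n+1) := by
    intro n; rw [pow_succ]; group
  -- the s-relation for conjugates
  have h2c : ∀ n : ℕ, S⁻¹ * ((T ^ n)⁻¹ * A * T ^ n) * S
      = ((T ^ n)⁻¹ * A * T ^ n) * ((T ^ (n+1))⁻¹ * A * T ^ (n+1)) * Q ^ ((-1:ℤ) ^ n * (-1)) := by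
    intro n
    have cST : S * T ^ n = T ^ n * S := (hST.pow_right n).eq
    have cST' : S⁻¹ * (T ^ n)⁻¹ = (T ^ n)⁻¹ * S⁻¹ := ((hST.pow_right n).inv_left.inv_right).eq
    have hmid : (T ^ n)⁻¹ * (T⁻¹ * A * T) * T ^ n = (T ^ (n+1))⁻¹ * A * T ^ (n+1) := by
      rw [pow_succ']; group
    have hQn : (T ^ n)⁻¹ * Q⁻¹ * T ^ n = Q ^ ((-1:ℤ) ^ n * (-1)) := by
      have := conj_neg_pow_zpow hTQ n (-1)
      simpa using this
    calc S⁻¹ * ((T ^ n)⁻¹ * A * T ^ n) * S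
        = (S⁻¹ * (T ^ n)⁻¹) * A * (T ^ n * S) := by group
      _ = ((T ^ n)⁻¹ * S⁻¹) * A * (S * T ^ n) := by rw [cST', ← cST]
      _ = (T ^ n)⁻¹ * (S⁻¹ * A * S) * T ^ n := by group
      _ = (T ^ n)⁻¹ * (A * (T⁻¹ * A * T) * Q⁻¹) * T ^ n := by rw [hA1]
      _ = ((T ^ n)⁻¹ * A * T ^ n) * ((T ^ n)⁻¹ * (T⁻¹ * A * T) * T ^ n)
            * ((T ^ n)⁻¹ * Q⁻¹ * T ^ n) := by group
      _ = ((T ^ n)⁻¹ * A * T ^ n) * ((T ^ (n+1))⁻¹ * A * T ^ (n+1))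
            * Q ^ ((-1:ℤ) ^ n * (-1)) := by rw [hmid, hQn]
  -- the double induction
  have main : ∀ n : ℕ,
      (A * ((T ^ n)⁻¹ * A * T ^ n)
        = ((T ^ n)⁻¹ * A * T ^ n) * A * P ^ ((-1:ℤ) ^ (n+1) * (Nat.fib n : ℤ))) ∧
      (A * ((T ^ (n+1))⁻¹ * A * T ^ (n+1))
        = ((T ^ (n+1))⁻¹ * A * T ^ (n+1)) * A * P ^ ((-1:ℤ) ^ (n+2) * (Nat.fib (n+1) : ℤ))) := by
    intro n
    induction n with
    | zero =>
      constructor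
      · simp
      · have base1 : A * (T⁻¹ * A * T) = (T⁻¹ * A * T) * A * P := by
          calc A * (T⁻¹ * A * T)
              = (T⁻¹ * A * T) * A * (A⁻¹ * (T⁻¹ * A * T)⁻¹ * A * (T⁻¹ * A * T)) := by group
            _ = (T⁻¹ * A * T) * A * P := by rw [h1]
        have e1 : ((-1:ℤ) ^ (0+2) * (Nat.fib (0+1) : ℤ)) = 1 := by norm_num
        rw [e1, zpow_one]
        simpa [pow_one] using base1
    | succ n ih =>
      refine ⟨ih.2, ?_⟩
      have hstep := step A P Q S T
        ((T ^ n)⁻¹ * A * T ^ n) ((T ^ (n+1))⁻¹ * A * T ^ (n+1))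
        ((T ^ (n+2))⁻¹ * A * T ^ (n+2))
        ((-1:ℤ) ^ (n+1) * (Nat.fib n : ℤ)) ((-1:ℤ) ^ (n+2) * (Nat.fib (n+1) : ℤ))
        ((-1:ℤ) ^ n * (-1)) ((-1:ℤ) ^ (n+1) * (-1))
        hAP hAQ hPQ hST (hPw (n+1)) (hQw (n+1)) hSP hTP hSQ hTQ hA1
        (hwu n) (h2c n) (h2c (n+1)) ih.1 ih.2
      show A * ((T ^ (n+2))⁻¹ * A * T ^ (n+2))
        = ((T ^ (n+2))⁻¹ * A * T ^ (n+2)) * A * P ^ ((-1:ℤ) ^ (n+3) * (Nat.fib (n+2) : ℤ))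
      rw [hstep, show (-1:ℤ) ^ (n+1) * (Nat.fib n : ℤ) - (-1:ℤ) ^ (n+2) * (Nat.fib (n+1) : ℤ)
        = (-1:ℤ) ^ (n+3) * (Nat.fib (n+2) : ℤ) by push_cast [Nat.fib_add_two]; ring]
  intro n
  obtain ⟨h, -⟩ := main n
  calc A⁻¹ * ((T ^ n)⁻¹ * A * T ^ n)⁻¹ * A * ((T ^ n)⁻¹ * A * T ^ n)
      = A⁻¹ * ((T ^ n)⁻¹ * A * T ^ n)⁻¹ * (A * ((T ^ n)⁻¹ * A * T ^ n)) := by group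
    _ = A⁻¹ * ((T ^ n)⁻¹ * A * T ^ n)⁻¹
        * (((T ^ n)⁻¹ * A * T ^ n) * A * P ^ ((-1:ℤ) ^ (n+1) * (Nat.fib n : ℤ))) := by rw [h]
    _ = P ^ ((-1:ℤ) ^ (n+1) * (Nat.fib n : ℤ)) := by group

end helpers

noncomputable def phi : F →* GammaBar := PresentedGroup.mk Rbar

lemma rel_one {r : F} (h : r ∈ Rbar) : phi r = 1 :=
  (QuotientGroup.eq_one_iff r).mpr (Subgroup.subset_normalClosure h)

lemma phi_of (l : Letter) : phi (FreeGroup.of l) = PresentedGroup.of l := rfl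

/-- Lemma 2.5: in `Γ̄`, `[a, t⁻ⁿ·a·tⁿ] = p^((−1)^(n+1)·F_n)` for all `n ≥ 0`, where
`F_n` is the `n`-th Fibonacci number. -/
theorem commutator_is_power_of_p :
    ∀ n : ℕ,
      ((PresentedGroup.of Letter.a : GammaBar))⁻¹ *
          (((PresentedGroup.of Letter.t : GammaBar) ^ n)⁻¹ *
            PresentedGroup.of Letter.a * (PresentedGroup.of Letter.t : GammaBar) ^ n)⁻¹ *
          PresentedGroup.of Letter.a *
          (((PresentedGroup.of Letter.t : GammaBar) ^ n)⁻¹ *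
            PresentedGroup.of Letter.a * (PresentedGroup.of Letter.t : GammaBar) ^ n) =
        (PresentedGroup.of Letter.p : GammaBar) ^ ((-1 : ℤ) ^ (n + 1) * (Nat.fib n : ℤ)) := by
  set A : GammaBar := PresentedGroup.of Letter.a with hA
  set P : GammaBar := PresentedGroup.of Letter.p with hP
  set Q : GammaBar := PresentedGroup.of Letter.q with hQ
  set S : GammaBar := PresentedGroup.of Letter.s with hS
  set T : GammaBar := PresentedGroup.of Letter.t with hT
  have r1 : A⁻¹ * (T⁻¹ * A * T)⁻¹ * A * (T⁻¹ * A * T) * P⁻¹ = 1 := by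
    have h := rel_one (show cmm a (t⁻¹ * a * t) * p⁻¹ ∈ Rbar from (Set.mem_insert _ _))
    simpa only [cmm, a, p, q, s, t, map_mul, map_inv, phi_of, ← hA, ← hP, ← hT] using h
  have h1 : A⁻¹ * (T⁻¹ * A * T)⁻¹ * A * (T⁻¹ * A * T) = P := by
    calc A⁻¹ * (T⁻¹ * A * T)⁻¹ * A * (T⁻¹ * A * T)
        = (A⁻¹ * (T⁻¹ * A * T)⁻¹ * A * (T⁻¹ * A * T) * P⁻¹) * P := by group
      _ = P := by rw [r1, one_mul]
  have r2 : A * (T⁻¹ * A * T) * ((S⁻¹ * A * S) * Q)⁻¹ = 1 := by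
    have h := rel_one (show a * (t⁻¹ * a * t) * ((s⁻¹ * a * s) * q)⁻¹ ∈ Rbar from (Set.mem_insert_of_mem _ (Set.mem_insert _ _)))
    simpa only [a, q, s, t, map_mul, map_inv, phi_of, ← hA, ← hQ, ← hS, ← hT] using h
  have hA1 : S⁻¹ * A * S = A * (T⁻¹ * A * T) * Q⁻¹ := by
    calc S⁻¹ * A * S
        = (A * (T⁻¹ * A * T) * ((S⁻¹ * A * S) * Q)⁻¹)⁻¹ * (A * (T⁻¹ * A * T)) * Q⁻¹ := by group
      _ = A * (T⁻¹ * A * T) * Q⁻¹ := by rw [r2]; group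
  have r3 : S⁻¹ * P * S * P = 1 := by
    have h := rel_one (show s⁻¹ * p * s * p ∈ Rbar from (Set.mem_insert_of_mem _ (Set.mem_insert_of_mem _ (Set.mem_insert _ _))))
    simpa only [p, s, map_mul, map_inv, phi_of, ← hP, ← hS] using h
  have hSP : S⁻¹ * P * S = P⁻¹ := conjneg_of_rel r3
  have r4 : T⁻¹ * P * T * P = 1 := by
    have h := rel_one (show t⁻¹ * p * t * p ∈ Rbar from (Set.mem_insert_of_mem _ (Set.mem_insert_of_mem _ (Set.mem_insert_of_mem _ (Set.mem_insert _ _)))))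
    simpa only [p, t, map_mul, map_inv, phi_of, ← hP, ← hT] using h
  have hTP : T⁻¹ * P * T = P⁻¹ := conjneg_of_rel r4
  have r5 : A⁻¹ * P⁻¹ * A * P = 1 := by
    have h := rel_one (show cmm a p ∈ Rbar from (Set.mem_insert_of_mem _ (Set.mem_insert_of_mem _ (Set.mem_insert_of_mem _ (Set.mem_insert_of_mem _ (Set.mem_insert _ _))))))
    simpa only [cmm, a, p, map_mul, map_inv, phi_of, ← hA, ← hP] using h
  have hAP : Commute A P := comm_of_rel r5
  have r6 : S⁻¹ * T⁻¹ * S * T = 1 := by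
    have h := rel_one (show cmm s t ∈ Rbar from (Set.mem_insert_of_mem _ (Set.mem_insert_of_mem _ (Set.mem_insert_of_mem _ (Set.mem_insert_of_mem _ (Set.mem_insert_of_mem _ (Set.mem_insert _ _)))))))
    simpa only [cmm, s, t, map_mul, map_inv, phi_of, ← hS, ← hT] using h
  have hST : Commute S T := comm_of_rel r6
  have r7 : P⁻¹ * Q⁻¹ * P * Q = 1 := by
    have h := rel_one (show cmm p q ∈ Rbar from (Set.mem_insert_of_mem _ (Set.mem_insert_of_mem _ (Set.mem_insert_of_mem _ (Set.mem_insert_of_mem _ (Set.mem_insert_of_mem _ (Set.mem_insert_of_mem _ (Set.mem_insert _ _))))))))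
    simpa only [cmm, p, q, map_mul, map_inv, phi_of, ← hP, ← hQ] using h
  have hPQ : Commute P Q := comm_of_rel r7
  have r8 : S⁻¹ * Q * S * Q = 1 := by
    have h := rel_one (show s⁻¹ * q * s * q ∈ Rbar from (Set.mem_insert_of_mem _ (Set.mem_insert_of_mem _ (Set.mem_insert_of_mem _ (Set.mem_insert_of_mem _ (Set.mem_insert_of_mem _ (Set.mem_insert_of_mem _ (Set.mem_insert_of_mem _ (Set.mem_insert _ _)))))))))
    simpa only [q, s, map_mul, map_inv, phi_of, ← hQ, ← hS] using h
  have hSQ : S⁻¹ * Q * S = Q⁻¹ := conjneg_of_rel r8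
  have r9 : T⁻¹ * Q * T * Q = 1 := by
    have h := rel_one (show t⁻¹ * q * t * q ∈ Rbar from (Set.mem_insert_of_mem _ (Set.mem_insert_of_mem _ (Set.mem_insert_of_mem _ (Set.mem_insert_of_mem _ (Set.mem_insert_of_mem _ (Set.mem_insert_of_mem _ (Set.mem_insert_of_mem _ (Set.mem_insert_of_mem _ (Set.mem_insert _ _))))))))))
    simpa only [q, t, map_mul, map_inv, phi_of, ← hQ, ← hT] using h
  have hTQ : T⁻¹ * Q * T = Q⁻¹ := conjneg_of_rel r9
  have r10 : A⁻¹ * Q⁻¹ * A * Q = 1 := by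
    have h := rel_one (show cmm a q ∈ Rbar from (Set.mem_insert_of_mem _ (Set.mem_insert_of_mem _ (Set.mem_insert_of_mem _ (Set.mem_insert_of_mem _ (Set.mem_insert_of_mem _ (Set.mem_insert_of_mem _ (Set.mem_insert_of_mem _ (Set.mem_insert_of_mem _ (Set.mem_insert_of_mem _ rfl))))))))))
    simpa only [cmm, a, q, map_mul, map_inv, phi_of, ← hA, ← hQ] using h
  have hAQ : Commute A Q := comm_of_rel r10
  exact key A P Q S T h1 hA1 hSP hTP hSQ hTQ hAP hST hPQ hAQ
end
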